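/- For all vectors v, w in ℝ^n with non-negative entries, (Σᵢ vᵢ⁴)^{1/2} · (Σᵢ wᵢ⁴)^{1/2} − Σᵢ vᵢ² wᵢ² ≤ (Σᵢ vᵢ²)(Σᵢ wᵢ²) − (Σᵢ vᵢ wᵢ)². -/

import Mathlib

/-!
Put `R = √(∑ vᵢ⁴) √(∑ wᵢ⁴)` and `C = ∑ vᵢ² wᵢ²`. Lagrange's identity, applied to `(v, w)` and to
`(v², w²)`, writes `(∑ vᵢ²)(∑ wᵢ²) - (∑ vᵢ wᵢ)²` as `½ ∑ᵢⱼ Dᵢⱼ²` and `R² - C²` as `½ ∑ᵢⱼ Dᵢⱼ² Eᵢⱼ²`,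
where `Dᵢⱼ = vᵢ wⱼ - vⱼ wᵢ` and `Eᵢⱼ = vᵢ wⱼ + vⱼ wᵢ`. For `i ≠ j`, Cauchy–Schwarz bounds
`vᵢ² wⱼ² + vⱼ² wᵢ²` by `R` and AM–GM bounds `2 vᵢ wⱼ vⱼ wᵢ` by `C`, so `Eᵢⱼ² ≤ R + C`.
Hence `(R - C)(R + C) ≤ (R + C)((∑ vᵢ²)(∑ wᵢ²) - (∑ vᵢ wᵢ)²)`, and dividing by `R + C` is the claim.
-/

open Finset

theorem Finset.add_le_sum_of_ne {ι M : Type*} [AddCommMonoid M] [PartialOrder M]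
    [IsOrderedAddMonoid M] {s : Finset ι} {f : ι → M} (hf : ∀ k ∈ s, 0 ≤ f k) {i j : ι}
    (hi : i ∈ s) (hj : j ∈ s) (hij : i ≠ j) : f i + f j ≤ ∑ k ∈ s, f k := by
  classical
  rw [← sum_pair hij]
  exact sum_le_sum_of_subset_of_nonneg (insert_subset hi (singleton_subset_iff.2 hj))
    fun k hk _ => hf k hk

theorem Finset.sum_sum_mul_sub_mul_sq {ι R : Type*} [Fintype ι] [CommRing R] (a b : ι → R) :
    ∑ i, ∑ j, (a i * b j - a j * b i) ^ 2
      = 2 * ((∑ i, a i ^ 2) * (∑ i, b i ^ 2) - (∑ i, a i * b i) ^ 2) := by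
  have h : ∀ i j, (a i * b j - a j * b i) ^ 2
      = a i ^ 2 * b j ^ 2 + a j ^ 2 * b i ^ 2 - 2 * ((a i * b i) * (a j * b j)) := by
    intro i j; ring
  simp only [h, sum_sub_distrib, sum_add_distrib, ← mul_sum, ← sum_mul]
  ring

theorem Real.mul_add_mul_le_sqrt_mul_sqrt (a b c d : ℝ) :
    a * b + c * d ≤ √(a ^ 2 + c ^ 2) * √(b ^ 2 + d ^ 2) := by
  simpa [Fin.sum_univ_two] using Real.sum_mul_le_sqrt_mul_sqrt univ ![a, c] ![b, d]

theorem sub_le_of_sq_sub_sq_le_mul {x y s : ℝ} (hx : 0 ≤ x) (hy : 0 ≤ y) (hs : 0 ≤ s)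
    (h : x ^ 2 - y ^ 2 ≤ (x + y) * s) : x - y ≤ s := by
  rcases (add_nonneg hx hy).eq_or_lt with hxy | hxy
  · linarith
  · exact le_of_mul_le_mul_left (by linarith [sq_sub_sq x y]) hxy

section

variable {ι : Type*} [Fintype ι] (v w : ι → ℝ)

theorem sq_mul_add_mul_le {i j : ι} (hij : i ≠ j) :
    (v i * w j + v j * w i) ^ 2
      ≤ √(∑ k, v k ^ 4) * √(∑ k, w k ^ 4) + ∑ k, v k ^ 2 * w k ^ 2 := by
  have cross : v i ^ 2 * w j ^ 2 + v j ^ 2 * w i ^ 2 ≤ √(∑ k, v k ^ 4) * √(∑ k, w k ^ 4) :=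
    calc v i ^ 2 * w j ^ 2 + v j ^ 2 * w i ^ 2
        ≤ √((v i ^ 2) ^ 2 + (v j ^ 2) ^ 2) * √((w j ^ 2) ^ 2 + (w i ^ 2) ^ 2) :=
          Real.mul_add_mul_le_sqrt_mul_sqrt _ _ _ _
      _ = √(v i ^ 4 + v j ^ 4) * √(w j ^ 4 + w i ^ 4) := by ring_nf
      _ ≤ √(∑ k, v k ^ 4) * √(∑ k, w k ^ 4) := by
          gcongr
          · exact add_le_sum_of_ne (f := fun k => v k ^ 4) (fun k _ => by positivity)
              (mem_univ _) (mem_univ _) hij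
          · exact add_le_sum_of_ne (f := fun k => w k ^ 4) (fun k _ => by positivity)
              (mem_univ _) (mem_univ _) hij.symm
  have diag : 2 * (v i * w i) * (v j * w j) ≤ ∑ k, v k ^ 2 * w k ^ 2 :=
    calc 2 * (v i * w i) * (v j * w j) ≤ (v i * w i) ^ 2 + (v j * w j) ^ 2 := two_mul_le_add_sq _ _
      _ = v i ^ 2 * w i ^ 2 + v j ^ 2 * w j ^ 2 := by ring
      _ ≤ ∑ k, v k ^ 2 * w k ^ 2 :=
          add_le_sum_of_ne (f := fun k => v k ^ 2 * w k ^ 2) (fun k _ => by positivity)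
            (mem_univ _) (mem_univ _) hij
  linear_combination cross + diag

theorem sq_sub_sq_le_mul_sq_sub_sq :
    (√(∑ i, v i ^ 4) * √(∑ i, w i ^ 4)) ^ 2 - (∑ i, v i ^ 2 * w i ^ 2) ^ 2
      ≤ (√(∑ i, v i ^ 4) * √(∑ i, w i ^ 4) + ∑ i, v i ^ 2 * w i ^ 2)
        * ((∑ i, v i ^ 2) * (∑ i, w i ^ 2) - (∑ i, v i * w i) ^ 2) := by
  set R := √(∑ i, v i ^ 4) * √(∑ i, w i ^ 4)
  set C := ∑ i, v i ^ 2 * w i ^ 2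
  have hR : R ^ 2 = (∑ i, (v i ^ 2) ^ 2) * (∑ i, (w i ^ 2) ^ 2) := by
    simp only [R, mul_pow, ← pow_mul]
    rw [Real.sq_sqrt (by positivity), Real.sq_sqrt (by positivity)]
  have bound : ∑ i, ∑ j, (v i ^ 2 * w j ^ 2 - v j ^ 2 * w i ^ 2) ^ 2
      ≤ (R + C) * ∑ i, ∑ j, (v i * w j - v j * w i) ^ 2 := by
    simp only [mul_sum]
    gcongr with i _ j _
    rcases eq_or_ne i j with rfl | hij
    · simp
    calc (v i ^ 2 * w j ^ 2 - v j ^ 2 * w i ^ 2) ^ 2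
        = (v i * w j + v j * w i) ^ 2 * (v i * w j - v j * w i) ^ 2 := by ring
      _ ≤ (R + C) * (v i * w j - v j * w i) ^ 2 := by
          gcongr; exact sq_mul_add_mul_le v w hij
  rw [sum_sum_mul_sub_mul_sq, sum_sum_mul_sub_mul_sq v w] at bound
  linarith

end

theorem sqrt_fourth_power_ineq_general (n : ℕ) (v w : Fin n → ℝ) :
    Real.sqrt (∑ i, v i ^ 4) * Real.sqrt (∑ i, w i ^ 4) - ∑ i, v i ^ 2 * w i ^ 2
      ≤ (∑ i, v i ^ 2) * (∑ i, w i ^ 2) - (∑ i, v i * w i) ^ 2 := by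
  refine sub_le_of_sq_sub_sq_le_mul (by positivity) (by positivity) ?_
    (sq_sub_sq_le_mul_sq_sub_sq v w)
  simpa using sub_nonneg.2 (sum_mul_sq_le_sq_mul_sq univ v w)

theorem sqrt_fourth_power_ineq (n : ℕ) (v w : Fin n → ℝ)
    (hv : ∀ i, 0 ≤ v i) (hw : ∀ i, 0 ≤ w i) :
    Real.sqrt (∑ i, v i ^ 4) * Real.sqrt (∑ i, w i ^ 4) - ∑ i, v i ^ 2 * w i ^ 2
      ≤ (∑ i, v i ^ 2) * (∑ i, w i ^ 2) - (∑ i, v i * w i) ^ 2 :=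
  sqrt_fourth_power_ineq_general n v w
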